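/- arXiv:2308.15465 — 2 statements merged into one kernel-verified Lean document; each statement's English description precedes it below -/
import Mathlib

section
/- The single level equation S i₁ ≐ i₂ ⊔ i₃ (with i₁, i₂, i₃ distinct variables) is solvable but admits no most general unifier. Consequently, not every solvable universe level unification problem has a most general unifier. -/
/-- Universe level expressions: `l ::= i | 0 | S l | l ⊔ l'`. -/
inductive Lvl : Type
  | var : ℕ → Lvl
  | zero : Lvl
  | succ : Lvl → Lvl
  | max : Lvl → Lvl → Lvl
  deriving DecidableEq

namespace Lvl

/-- Interpretation of a level under an assignment `φ` of naturals to variables. -/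
def eval (φ : ℕ → ℕ) : Lvl → ℕ
  | .var i => φ i
  | .zero => 0
  | .succ l => l.eval φ + 1
  | .max a b => Nat.max (a.eval φ) (b.eval φ)

/-- Semantic equivalence: equal value under every assignment. -/
def Equiv (l l' : Lvl) : Prop := ∀ φ : ℕ → ℕ, l.eval φ = l'.eval φ

/-- Application of a level substitution. -/
def subst (θ : ℕ → Lvl) : Lvl → Lvl
  | .var i => θ i
  | .zero => .zero
  | .succ l => .succ (l.subst θ)
  | .max a b => .max (a.subst θ) (b.subst θ)

/-- Free variables of a level. -/
def fv : Lvl → Finset ℕ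
  | .var i => {i}
  | .zero => ∅
  | .succ l => l.fv
  | .max a b => a.fv ∪ b.fv

/-- The constant level `n`, i.e. `Sⁿ 0`. -/
def const (n : ℕ) : Lvl := Lvl.succ^[n] Lvl.zero

/-- The level `n + i`, i.e. `Sⁿ i`. -/
def atom (n i : ℕ) : Lvl := Lvl.succ^[n] (Lvl.var i)

end Lvl

/-- `θ` is a unifier of the equation `l₁ ≐ l₂`. -/
def Unifies (θ : ℕ → Lvl) (l₁ l₂ : Lvl) : Prop := Lvl.Equiv (l₁.subst θ) (l₂.subst θ)

/-- `θ` is a most general unifier of the equation `l₁ ≐ l₂`. -/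
def IsMGU (θ : ℕ → Lvl) (l₁ l₂ : Lvl) : Prop :=
  Unifies θ l₁ l₂ ∧ ∀ τ, Unifies τ l₁ l₂ →
    ∃ θ' : ℕ → Lvl, ∀ i ∈ l₁.fv ∪ l₂.fv, Lvl.Equiv ((θ i).subst θ') (τ i)

/-- The level `p ⊔ (n₁ + i₁) ⊔ ... ⊔ (n_m + i_m)` given by canonical-form data. -/
def buildCanon (p : ℕ) (L : List (ℕ × ℕ)) : Lvl :=
  L.foldr (fun a acc => Lvl.max (Lvl.atom a.1 a.2) acc) (Lvl.const p)

/-- The equation `buildCanon p₁ L₁ ≐ buildCanon p₂ L₂` is in canonical form: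
both sides canonical (coefficients bounded by the constant coefficient, variables
pairwise distinct), shared variables have equal coefficients on both sides, and
some coefficient on some side equals `0`. -/
def CanonEqn (p₁ : ℕ) (L₁ : List (ℕ × ℕ)) (p₂ : ℕ) (L₂ : List (ℕ × ℕ)) : Prop :=
  (∀ a ∈ L₁, a.1 ≤ p₁) ∧ (L₁.map Prod.snd).Nodup ∧
  (∀ a ∈ L₂, a.1 ≤ p₂) ∧ (L₂.map Prod.snd).Nodup ∧
  (∀ a ∈ L₁, ∀ b ∈ L₂, a.2 = b.2 → a.1 = b.1) ∧
  0 ∈ (p₁ :: p₂ :: (L₁ ++ L₂).map Prod.fst)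

/-!
The unifiers `i₂ ↦ S i₁, i₃ ↦ 0` and `i₃ ↦ S i₁, i₂ ↦ 0` of `S i₁ ≐ i₂ ⊔ i₃` would both be
instances of a most general unifier `θ`, so `θ i₃` and `θ i₂` would each evaluate to `0` under
some assignment. Levels are monotone in their variables, so both would vanish at the pointwise
minimum of the two assignments, where `θ` being a unifier forces `S (θ i₁)` to vanish too.
-/

namespace Lvl

theorem eval_subst (θ : ℕ → Lvl) (φ : ℕ → ℕ) (l : Lvl) :
    (l.subst θ).eval φ = l.eval fun i => (θ i).eval φ := by
  induction l <;> simp [subst, eval, *]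

theorem monotone_eval (l : Lvl) : Monotone fun φ : ℕ → ℕ => l.eval φ := by
  intro φ φ' h
  induction l with
  | var i => exact h i
  | zero => exact le_rfl
  | succ l ih => exact Nat.succ_le_succ ih
  | max a b iha ihb => exact max_le_max iha ihb

theorem eval_eq_zero_of_le {l : Lvl} {φ ψ : ℕ → ℕ} (hψ : l.eval ψ = 0) (h : φ ≤ ψ) :
    l.eval φ = 0 :=
  Nat.eq_zero_of_le_zero (hψ ▸ l.monotone_eval h)

end Lvl

theorem unifies_max_comm {θ : ℕ → Lvl} {l a b : Lvl} :
    Unifies θ l (.max a b) ↔ Unifies θ l (.max b a) := by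
  simp only [Unifies, Lvl.Equiv, Lvl.subst, Lvl.eval, Nat.max_comm]

theorem IsMGU.exists_eval_eq_zero {θ τ : ℕ → Lvl} {l₁ l₂ : Lvl} (hθ : IsMGU θ l₁ l₂)
    (hτ : Unifies τ l₁ l₂) {i : ℕ} (hi : i ∈ l₁.fv ∪ l₂.fv) (hτi : Lvl.Equiv (τ i) .zero) :
    ∃ ψ : ℕ → ℕ, (θ i).eval ψ = 0 := by
  obtain ⟨θ', hθ'⟩ := hθ.2 τ hτ
  refine ⟨fun j => (θ' j).eval id, ?_⟩
  rw [← Lvl.eval_subst, hθ' i hi id]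
  exact hτi id

section SuccMax

variable {i₁ i₂ i₃ : ℕ}

def succMaxUnifier (i₁ i₂ i₃ : ℕ) : ℕ → Lvl :=
  fun j => if j = i₂ then .succ (.var i₁) else if j = i₃ then .zero else .var j

theorem unifies_succMaxUnifier (h₁₂ : i₁ ≠ i₂) (h₁₃ : i₁ ≠ i₃) (h₂₃ : i₂ ≠ i₃) :
    Unifies (succMaxUnifier i₁ i₂ i₃) (.succ (.var i₁)) (.max (.var i₂) (.var i₃)) := by
  intro φ
  simp [succMaxUnifier, Lvl.subst, Lvl.eval, h₁₂, h₁₃, h₂₃.symm]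

theorem Unifies.eval_ne_zero_or_eval_ne_zero {θ : ℕ → Lvl}
    (hθ : Unifies θ (.succ (.var i₁)) (.max (.var i₂) (.var i₃))) (ψ₂ ψ₃ : ℕ → ℕ) :
    (θ i₂).eval ψ₂ ≠ 0 ∨ (θ i₃).eval ψ₃ ≠ 0 := by
  by_contra! h
  have h₂ := Lvl.eval_eq_zero_of_le h.1 (inf_le_left : ψ₂ ⊓ ψ₃ ≤ ψ₂)
  have h₃ := Lvl.eval_eq_zero_of_le h.2 (inf_le_right : ψ₂ ⊓ ψ₃ ≤ ψ₃)
  have := hθ (ψ₂ ⊓ ψ₃)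
  simp [Lvl.subst, Lvl.eval, h₂, h₃] at this

theorem not_exists_isMGU_succ_max (h₁₂ : i₁ ≠ i₂) (h₁₃ : i₁ ≠ i₃) (h₂₃ : i₂ ≠ i₃) :
    ¬ ∃ θ, IsMGU θ (.succ (.var i₁)) (.max (.var i₂) (.var i₃)) := by
  rintro ⟨θ, hθ⟩
  have hfv₂ : i₂ ∈ (Lvl.succ (.var i₁)).fv ∪ (Lvl.max (.var i₂) (.var i₃)).fv := by simp [Lvl.fv]
  have hfv₃ : i₃ ∈ (Lvl.succ (.var i₁)).fv ∪ (Lvl.max (.var i₂) (.var i₃)).fv := by simp [Lvl.fv]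
  obtain ⟨ψ₂, hψ₂⟩ := hθ.exists_eval_eq_zero
    (unifies_max_comm.2 (unifies_succMaxUnifier h₁₃ h₁₂ h₂₃.symm)) hfv₂
    (by simp [succMaxUnifier, h₂₃, Lvl.Equiv])
  obtain ⟨ψ₃, hψ₃⟩ := hθ.exists_eval_eq_zero (unifies_succMaxUnifier h₁₂ h₁₃ h₂₃) hfv₃
    (by simp [succMaxUnifier, h₂₃.symm, Lvl.Equiv])
  exact (hθ.1.eval_ne_zero_or_eval_ne_zero ψ₂ ψ₃).elim (· hψ₂) (· hψ₃)

end SuccMax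

/-- The level equation `S i₁ ≐ i₂ ⊔ i₃` (with `i₁, i₂, i₃` distinct variables) is
solvable but admits no most general unifier; consequently, not every solvable
universe level unification equation has a most general unifier. -/
theorem no_mgu_example :
    ((∃ θ, Unifies θ (Lvl.succ (Lvl.var 0)) (Lvl.max (Lvl.var 1) (Lvl.var 2))) ∧
      ¬ ∃ θ, IsMGU θ (Lvl.succ (Lvl.var 0)) (Lvl.max (Lvl.var 1) (Lvl.var 2))) ∧
    ¬ ∀ l₁ l₂ : Lvl, (∃ θ, Unifies θ l₁ l₂) → ∃ θ, IsMGU θ l₁ l₂ := by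
  have solvable : ∃ θ, Unifies θ (Lvl.succ (Lvl.var 0)) (Lvl.max (Lvl.var 1) (Lvl.var 2)) :=
    ⟨_, unifies_succMaxUnifier (by decide) (by decide) (by decide)⟩
  have no_mgu := not_exists_isMGU_succ_max (i₁ := 0) (i₂ := 1) (i₃ := 2)
    (by decide) (by decide) (by decide)
  exact ⟨⟨solvable, no_mgu⟩, fun h => no_mgu (h _ _ solvable)⟩
end

section
/- Consider the level equation n ⊔ i ≐ l in canonical form, where n is a constant, i is a variable, and the constant coefficient of l is strictly greater than n. Then the substitution τ = (i ↦ l) is a most general unifier of this equation. -/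
/-!
Write `V = ⟦l⟧φ`. The canonical form forces every occurrence of `i` in `l` to have
coefficient `0`, so raising the value of `i` to `V` leaves `⟦l⟧` at `V`; since also
`V ≥ l⟨0⟩ > n`, both sides evaluate to `V` after `i ↦ l`. Conversely, for a unifier `τ` the
value of `l[τ]` is at least `l⟨0⟩ > n`, so `n ⊔ τ i ≃ l[τ]` forces `τ i ≃ l[τ]`, and `τ`
itself is the factor witnessing generality.
-/

namespace Lvl

lemma eval_subst_s6 (φ : ℕ → ℕ) (θ : ℕ → Lvl) (t : Lvl) :
    (t.subst θ).eval φ = t.eval (fun j => (θ j).eval φ) := by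
  induction t with
  | var j => rfl
  | zero => rfl
  | succ l ih => simp only [subst, eval, ih]
  | max a b iha ihb => simp only [subst, eval, iha, ihb]

lemma eval_max (φ : ℕ → ℕ) (a b : Lvl) : (a.max b).eval φ = Max.max (a.eval φ) (b.eval φ) := rfl

lemma eval_succ_iterate (φ : ℕ → ℕ) (n : ℕ) (t : Lvl) :
    (succ^[n] t).eval φ = t.eval φ + n := by
  induction n with
  | zero => rfl
  | succ m ih => rw [Function.iterate_succ_apply', eval, ih, Nat.add_assoc]

lemma eval_const (φ : ℕ → ℕ) (n : ℕ) : (const n).eval φ = n := by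
  simp [const, eval_succ_iterate, eval]

lemma eval_atom (φ : ℕ → ℕ) (n j : ℕ) : (atom n j).eval φ = n + φ j := by
  rw [atom, eval_succ_iterate, eval, Nat.add_comm]

lemma eval_subst_update (φ : ℕ → ℕ) (i : ℕ) (t l : Lvl) :
    (l.subst (fun j => if j = i then t else var j)).eval φ
      = l.eval (Function.update φ i (t.eval φ)) := by
  rw [eval_subst_s6]
  congr 1
  funext j
  by_cases hj : j = i <;> simp [hj, eval]

lemma eval_subst_const (φ : ℕ → ℕ) (θ : ℕ → Lvl) (n : ℕ) :
    ((const n).subst θ).eval φ = n := by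
  rw [eval_subst_s6, eval_const]

end Lvl

open Lvl

lemma buildCanon_cons (p : ℕ) (b : ℕ × ℕ) (L : List (ℕ × ℕ)) :
    buildCanon p (b :: L) = (atom b.1 b.2).max (buildCanon p L) := rfl

lemma eval_buildCanon_le_iff (φ : ℕ → ℕ) (p : ℕ) (L : List (ℕ × ℕ)) (M : ℕ) :
    (buildCanon p L).eval φ ≤ M ↔ p ≤ M ∧ ∀ a ∈ L, a.1 + φ a.2 ≤ M := by
  induction L with
  | nil => simp [buildCanon, eval_const]
  | cons b L ih =>
    rw [buildCanon_cons, eval_max, max_le_iff, ih, eval_atom, List.forall_mem_cons]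
    tauto

lemma le_eval_buildCanon (φ : ℕ → ℕ) (p : ℕ) (L : List (ℕ × ℕ)) :
    p ≤ (buildCanon p L).eval φ :=
  ((eval_buildCanon_le_iff φ p L _).mp le_rfl).1

lemma atom_le_eval_buildCanon (φ : ℕ → ℕ) (p : ℕ) {L : List (ℕ × ℕ)} {a : ℕ × ℕ}
    (ha : a ∈ L) : a.1 + φ a.2 ≤ (buildCanon p L).eval φ :=
  ((eval_buildCanon_le_iff φ p L _).mp le_rfl).2 a ha

lemma eval_buildCanon_update_self (φ : ℕ → ℕ) (p i : ℕ) (L : List (ℕ × ℕ))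
    (hcoef : ∀ a ∈ L, a.2 = i → a.1 = 0) :
    (buildCanon p L).eval (Function.update φ i ((buildCanon p L).eval φ))
      = (buildCanon p L).eval φ := by
  set ψ := Function.update φ i ((buildCanon p L).eval φ)
  refine le_antisymm ((eval_buildCanon_le_iff ψ p L _).mpr ⟨le_eval_buildCanon φ p L, ?_⟩)
    ((eval_buildCanon_le_iff φ p L _).mpr ⟨le_eval_buildCanon ψ p L, ?_⟩)
  all_goals
    intro a ha
    have hφ := atom_le_eval_buildCanon φ p ha
    have hψ := atom_le_eval_buildCanon ψ p ha
    by_cases hai : a.2 = i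
    · simp only [ψ, hai, Function.update_self, hcoef a ha hai] at hφ hψ ⊢
      omega
    · simp only [ψ, hai, ne_eq, not_false_eq_true, Function.update_of_ne] at hψ ⊢
      omega

lemma CanonEqn.fst_eq_zero_of_snd_eq {n i p : ℕ} {L : List (ℕ × ℕ)}
    (h : CanonEqn n [(0, i)] p L) : ∀ a ∈ L, a.2 = i → a.1 = 0 :=
  fun a ha hai => (h.2.2.2.2.1 (0, i) (List.mem_singleton_self _) a ha hai.symm).symm

lemma Unifies.equiv_of_const_lt {τ : ℕ → Lvl} {n i : ℕ} {l : Lvl}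
    (hτ : Unifies τ ((const n).max (var i)) l) (hl : ∀ φ, n < (l.subst τ).eval φ) :
    Equiv (τ i) (l.subst τ) := by
  intro φ
  have hunif := hτ φ
  have hφ := hl φ
  simp only [subst, eval_max, eval_subst_const] at hunif
  omega

/-- For a level equation `n ⊔ i ≐ l` in canonical form with `n` strictly smaller
than the constant coefficient of `l` (here `l = buildCanon p L`, whose constant
coefficient is `p`), the substitution `i ↦ l` is a most general unifier. -/
theorem mgu_const_max_var (n i p : ℕ) (L : List (ℕ × ℕ))
    (hcanon : CanonEqn n [(0, i)] p L) (hlt : n < p) :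
    IsMGU (fun j => if j = i then buildCanon p L else Lvl.var j)
      (Lvl.max (Lvl.const n) (Lvl.var i)) (buildCanon p L) := by
  refine ⟨fun φ => ?_, fun τ hτ => ⟨τ, fun j _ => ?_⟩⟩
  · have hp := le_eval_buildCanon φ p L
    simp only [subst, eval_max, eval_subst_const, if_true]
    rw [eval_subst_update, eval_buildCanon_update_self φ p i L hcanon.fst_eq_zero_of_snd_eq]
    omega
  · by_cases hj : j = i
    · subst hj
      have hl φ : n < ((buildCanon p L).subst τ).eval φ := by
        rw [eval_subst_s6]
        exact hlt.trans_le (le_eval_buildCanon _ p L)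
      simp only [if_true]
      exact fun φ => (hτ.equiv_of_const_lt hl φ).symm
    · simp only [hj, if_false, subst]
      exact fun _ => rfl
end
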